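/- Fix integers t ≥ 2 and s ≥ 2. Let G be the graph with vertex set the disjoint union of sets V_1, V_2, …, V_{2t}, where |V_1| = |V_2| = 2 and |V_i| = s for 3 ≤ i ≤ 2t, in which two distinct vertices are adjacent if and only if they lie in the same set V_i, or they lie in consecutive sets V_i and V_{i+1} for some 1 ≤ i ≤ 2t − 1. Then G is connected, rc(G) = 2t − 1, α(G) = t, and the diameter of G equals 2t − 1 (so rc(G) = 2α(G) − 1 = diam(G)). -/

import Mathlib

open SimpleGraph

/-- A coloring `c` of the (potential) edges of `G` with `k` colors makes `G`
rainbow connected if any two vertices are joined by a path whose edges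
receive pairwise distinct colors. -/
def RainbowConnectedWith {V : Type*} (G : SimpleGraph V) {k : ℕ}
    (c : Sym2 V → Fin k) : Prop :=
  ∀ u v : V, ∃ p : G.Walk u v, p.IsPath ∧ (p.edges.map c).Nodup

/-- The rainbow connection number: the least number of colors making `G`
rainbow connected. -/
noncomputable def rc {V : Type*} (G : SimpleGraph V) : ℕ :=
  sInf {k | ∃ c : Sym2 V → Fin k, RainbowConnectedWith G c}

/-- The independence number: the largest cardinality of a set of pairwise
non-adjacent vertices. -/
noncomputable def indepNum {V : Type*} (G : SimpleGraph V) : ℕ :=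
  sSup {n | ∃ s : Finset V, s.card = n ∧ (↑s : Set V).Pairwise fun a b => ¬ G.Adj a b}

/-- Example 2: sets `V_1, …, V_{2t}` with `|V_1| = |V_2| = 2` and `|V_i| = s`
for `i ≥ 3`; each `V_i` is a clique and every vertex of `V_i` is joined to
every vertex of `V_{i+1}`. Vertices are indexed zero-based: part `i : Fin (2t)`
corresponds to `V_{i+1}`. -/
def exampleTwo (t s : ℕ) :
    SimpleGraph (Σ i : Fin (2 * t), Fin (if (i : ℕ) < 2 then 2 else s)) where
  Adj x y := x ≠ y ∧
    ((x.1 : ℕ) = (y.1 : ℕ) ∨ (x.1 : ℕ) + 1 = (y.1 : ℕ) ∨ (y.1 : ℕ) + 1 = (x.1 : ℕ))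
  symm := by
    constructor
    rintro x y ⟨h1, h2⟩
    exact ⟨h1.symm, by tauto⟩
  loopless := by
    constructor
    rintro x ⟨h1, -⟩
    exact h1 rfl


/-!
Colour an edge by the smaller of the indices of the parts containing its endpoints, merging the
colours of the edges inside the last part with those between the last two parts. Any two vertices
in different parts are then joined by a path that advances one part per step, whose colours are
consecutive integers; so `2t − 1` colours suffice. Conversely a walk advances at most one part per
step, so the first and last parts are at distance `2t − 1`, and `rc G ≥ diam G` in any graph.
For the independence number, an independent set meets each pair `V_{2j−1} ∪ V_{2j}` (a clique)
at most once, and one vertex from every other part is independent.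
-/

namespace SimpleGraph

variable {V : Type*} {G : SimpleGraph V} {f : V → ℕ} {u v : V}

theorem Walk.apply_le_apply_add_length (hf : ∀ x y, G.Adj x y → f y ≤ f x + 1)
    (p : G.Walk u v) : f v ≤ f u + p.length := by
  induction p with
  | nil => simp
  | cons h _ ih =>
    have := hf _ _ h
    rw [Walk.length_cons]
    omega

theorem Reachable.apply_le_apply_add_dist (hf : ∀ x y, G.Adj x y → f y ≤ f x + 1)
    (h : G.Reachable u v) : f v ≤ f u + G.dist u v := by
  obtain ⟨p, hp⟩ := h.exists_walk_length_eq_dist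
  exact hp ▸ p.apply_le_apply_add_length hf

def minColoring (f : V → ℕ) : Sym2 V → ℕ :=
  Sym2.lift ⟨fun x y => min (f x) (f y), fun _ _ => min_comm _ _⟩

@[simp]
theorem minColoring_mk (x y : V) : minColoring f s(x, y) = min (f x) (f y) := rfl

theorem Walk.map_minColoring_edges_eq_range' (p : G.Walk u v) {a n : ℕ}
    (h : p.support.map f = List.range' a (n + 1)) :
    p.edges.map (minColoring f) = List.range' a n := by
  induction p generalizing a n with
  | nil =>
    obtain rfl : n = 0 := by simpa using congrArg List.length h
    rfl
  | cons hadj q ih =>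
    rw [Walk.support_cons, List.map_cons, List.range'_succ, List.cons.injEq] at h
    obtain ⟨rfl, hq⟩ := h
    cases n with
    | zero => simp at hq
    | succ m =>
      have hw := (List.cons.inj (q.cons_tail_support ▸ List.range'_succ ▸ hq)).1
      rw [Walk.edges_cons, List.map_cons, ih hq, minColoring_mk, hw, List.range'_succ]
      simp

end SimpleGraph

namespace RainbowConnectedWith

variable {V : Type*} {G : SimpleGraph V} {k : ℕ} {c : Sym2 V → Fin k}

theorem edist_le (hc : RainbowConnectedWith G c) (u v : V) : G.edist u v ≤ k := by
  obtain ⟨p, -, hp⟩ := hc u v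
  have := hp.length_le_card
  rw [List.length_map, Walk.length_edges, Fintype.card_fin] at this
  exact (SimpleGraph.edist_le p).trans (by exact_mod_cast this)

theorem ediam_le (hc : RainbowConnectedWith G c) : G.ediam ≤ k :=
  ediam_le_of_edist_le hc.edist_le

theorem rc_le (hc : RainbowConnectedWith G c) : rc G ≤ k :=
  Nat.sInf_le ⟨c, hc⟩

theorem diam_le_rc (hc : RainbowConnectedWith G c) : G.diam ≤ rc G := by
  obtain ⟨c', hc'⟩ : ∃ c' : Sym2 V → Fin (rc G), RainbowConnectedWith G c' :=
    Nat.sInf_mem (s := {k | ∃ c : Sym2 V → Fin k, RainbowConnectedWith G c}) ⟨k, c, hc⟩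
  exact ENat.toNat_le_of_le_natCast hc'.ediam_le

end RainbowConnectedWith

theorem indepNum_eq_indepNum {V : Type*} (G : SimpleGraph V) :
    _root_.indepNum G = G.indepNum := by
  simp only [_root_.indepNum, SimpleGraph.indepNum, SimpleGraph.isNIndepSet_iff,
    SimpleGraph.isIndepSet_iff, and_comm]

namespace exampleTwo

variable {t s : ℕ}

abbrev Vertex (t s : ℕ) := Σ i : Fin (2 * t), Fin (if (i : ℕ) < 2 then 2 else s)

def level (x : Vertex t s) : ℕ := x.1

theorem level_lt (x : Vertex t s) : level x < 2 * t := x.1.isLt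

theorem adj_iff {x y : Vertex t s} : (exampleTwo t s).Adj x y ↔
    x ≠ y ∧ (level x = level y ∨ level x + 1 = level y ∨ level y + 1 = level x) :=
  Iff.rfl

theorem level_le_add_one_of_adj (x y : Vertex t s) (h : (exampleTwo t s).Adj x y) :
    level y ≤ level x + 1 := by
  rw [adj_iff] at h
  omega

def vertexAt (hs : 0 < s) (i : ℕ) (hi : i < 2 * t) : Vertex t s :=
  ⟨⟨i, hi⟩, ⟨0, by split <;> omega⟩⟩

@[simp]
theorem level_vertexAt (hs : 0 < s) (i : ℕ) (hi : i < 2 * t) : level (vertexAt hs i hi) = i := rfl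

theorem exists_walk_map_level_support_eq_range' (hs : 0 < s) {u v : Vertex t s}
    (h : level u < level v) :
    ∃ p : (exampleTwo t s).Walk u v,
      p.support.map level = List.range' (level u) (level v - level u + 1) := by
  obtain ⟨n, hn⟩ : ∃ n, level v = level u + n + 1 := ⟨level v - level u - 1, by omega⟩
  rw [hn, show level u + n + 1 - level u + 1 = n + 2 by omega]
  induction n generalizing u with
  | zero =>
    have hadj : (exampleTwo t s).Adj u v := adj_iff.2 ⟨by rintro rfl; omega, by omega⟩
    exact ⟨hadj.toWalk, by simp [hn, List.range'_succ]⟩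
  | succ n ih =>
    have hw : level u + 1 < 2 * t := by have := level_lt v; omega
    set w := vertexAt hs (level u + 1) hw
    have hadj : (exampleTwo t s).Adj u w :=
      adj_iff.2 ⟨by rintro h; have := congrArg level h; simp [w] at this, by simp [w]⟩
    obtain ⟨p, hp⟩ := ih (u := w) (by simp [w]; omega) (by simp [w]; omega)
    refine ⟨.cons hadj p, ?_⟩
    rw [Walk.support_cons, List.map_cons, hp, List.range'_succ (n := n + 2)]
    simp [w]

def coloring (ht : 0 < t) (e : Sym2 (Vertex t s)) : Fin (2 * t - 1) :=
  ⟨min (minColoring level e) (2 * t - 2), by omega⟩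

theorem rainbowConnectedWith_coloring (ht : 0 < t) (hs : 0 < s) :
    RainbowConnectedWith (exampleTwo t s) (coloring ht) := by
  intro u v
  wlog huv : level u ≤ level v generalizing u v
  · obtain ⟨p, hp, hnd⟩ := this v u (by omega)
    refine ⟨p.reverse, hp.reverse, ?_⟩
    rwa [Walk.edges_reverse, List.map_reverse, List.nodup_reverse]
  rcases huv.lt_or_eq with hlt | heq
  · obtain ⟨p, hp⟩ := exists_walk_map_level_support_eq_range' hs hlt
    have hcol := p.map_minColoring_edges_eq_range' hp
    refine ⟨p, .mk' (List.Nodup.of_map level (hp ▸ List.nodup_range')), ?_⟩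
    have huncapped : ∀ e ∈ p.edges, (coloring ht e : ℕ) = minColoring level e := by
      intro e he
      have : minColoring level e < level v := by
        have := List.mem_range'_1.1 (hcol ▸ List.mem_map_of_mem he)
        omega
      have := level_lt v
      simp only [coloring]
      omega
    refine List.Nodup.of_map Fin.val ?_
    rw [List.map_map, List.map_congr_left (f := Fin.val ∘ coloring ht) huncapped, hcol]
    exact List.nodup_range'
  · by_cases h : u = v
    · subst h
      exact ⟨.nil, .nil, by simp⟩
    · have hadj : (exampleTwo t s).Adj u v := adj_iff.2 ⟨h, .inl heq⟩
      exact ⟨hadj.toWalk, by simp [h], by simp⟩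

theorem card_le_of_isIndepSet {S : Finset (Vertex t s)} (hS : (exampleTwo t s).IsIndepSet S) :
    S.card ≤ t := by
  have hinj : Set.InjOn (fun x : Vertex t s => level x / 2) ↑S := by
    intro x hx y hy hxy
    by_contra hne
    have hnadj := hS hx hy hne
    simp only [adj_iff, not_and, not_or] at hnadj hxy
    have := hnadj hne
    omega
  have hmaps : Set.MapsTo (fun x : Vertex t s => level x / 2) ↑S ↑(Finset.range t) := by
    intro x _
    have := level_lt x
    simp only [Finset.coe_range, Set.mem_Iio]
    omega
  simpa using Finset.card_le_card_of_injOn _ hmaps hinj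

theorem exists_isNIndepSet (hs : 0 < s) :
    ∃ S : Finset (Vertex t s), (exampleTwo t s).IsNIndepSet t S := by
  have hevenLevel (i : Fin t) : 2 * (i : ℕ) < 2 * t := by omega
  have hlevel_inj : Function.Injective fun i : Fin t => vertexAt hs (2 * i) (hevenLevel i) := by
    intro i j hij
    have := congrArg level hij
    simp only [level_vertexAt] at this
    omega
  refine ⟨Finset.univ.image fun i : Fin t => vertexAt hs (2 * i) (hevenLevel i), ⟨?_, ?_⟩⟩
  · simp only [Finset.coe_image, Finset.coe_univ, Set.image_univ]
    rintro _ ⟨i, rfl⟩ _ ⟨j, rfl⟩ hne hadj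
    have hij : (i : ℕ) ≠ j := fun h => hne (by rw [Fin.ext h])
    simp only [adj_iff, level_vertexAt] at hadj
    omega
  · rw [Finset.card_image_of_injective _ hlevel_inj, Finset.card_univ, Fintype.card_fin]

theorem indepNum_eq (hs : 0 < s) : (exampleTwo t s).indepNum = t := by
  obtain ⟨S, hS⟩ := (exampleTwo t s).exists_isNIndepSet_indepNum
  obtain ⟨T, hT⟩ := exists_isNIndepSet (t := t) hs
  exact le_antisymm (hS.card_eq.symm.le.trans (card_le_of_isIndepSet hS.isIndepSet))
    (hT.card_eq.symm.le.trans hT.isIndepSet.card_le_indepNum)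

end exampleTwo

/-- For `t ≥ 2` and `s ≥ 2`, the graph of Example 2 is connected and satisfies
`rc(G) = 2t − 1`, `α(G) = t` and `diam(G) = 2t − 1`. -/
theorem exampleTwo_props (t s : ℕ) (ht : 2 ≤ t) (hs : 2 ≤ s) :
    (exampleTwo t s).Connected ∧
    rc (exampleTwo t s) = 2 * t - 1 ∧
    _root_.indepNum (exampleTwo t s) = t ∧
    (exampleTwo t s).diam = 2 * t - 1 := by
  open exampleTwo in
  have hc := rainbowConnectedWith_coloring (s := s) (by omega : 0 < t) (by omega : 0 < s)
  have hediam : (exampleTwo t s).ediam ≠ ⊤ :=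
    ne_top_of_le_ne_top (ENat.natCast_ne_top _) hc.ediam_le
  let first : Vertex t s := vertexAt (by omega) 0 (by omega)
  let last : Vertex t s := vertexAt (by omega) (2 * t - 1) (by omega)
  have hfar : 2 * t - 1 ≤ (exampleTwo t s).dist first last := by
    simpa [first, last] using (preconnected_of_ediam_ne_top hediam first last)
      |>.apply_le_apply_add_dist level_le_add_one_of_adj
  have hdist_le_diam := dist_le_diam hediam (u := first) (v := last)
  have hdiam_le_rc := hc.diam_le_rc
  have hrc_le := hc.rc_le
  have : Nonempty (Vertex t s) := ⟨first⟩
  exact ⟨connected_of_ediam_ne_top hediam, by omega,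
    (indepNum_eq_indepNum _).trans (indepNum_eq (by omega)), by omega⟩
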